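/- arXiv:1909.11152 — 4 statements merged into one kernel-verified Lean document; each statement's English description precedes it below -/
import Mathlib

section
/- Any triangle in the Euclidean plane whose three side lengths are all at least 1 and whose area is at most 1/4 has at least one angle of measure at least 2π/3. -/
/-!
Twice the area of a triangle is `sin ∠A · |AB| · |AC|`, at every vertex. With sides at least `1`
and area at most `1/4`, every angle therefore has sine at most `1/2`. One angle is at least `π/3`,
and since `sin > 1/2` on `(π/6, 5π/6)`, that angle must be at least `5π/6 ≥ 2π/3`.
-/

open Real EuclideanGeometry

noncomputable def triArea (A B C : EuclideanSpace ℝ (Fin 2)) : ℝ :=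
  |(B 0 - A 0) * (C 1 - A 1) - (B 1 - A 1) * (C 0 - A 0)| / 2

lemma Real.one_half_lt_sin_of_mem_Ioo {θ : ℝ} (hθ : θ ∈ Set.Ioo (π / 6) (5 * π / 6)) :
    1 / 2 < sin θ := by
  obtain ⟨hlo, hhi⟩ := hθ
  have hsin : ∀ φ ∈ Set.Ioc (π / 6) (π / 2), 1 / 2 < sin φ := fun φ ⟨hφ, hφ'⟩ => by
    rw [← sin_pi_div_six]
    exact strictMonoOn_sin ⟨by linarith [pi_pos], by linarith⟩ ⟨by linarith [pi_pos], hφ'⟩ hφ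
  rcases le_or_gt θ (π / 2) with hθ | hθ
  · exact hsin θ ⟨hlo, hθ⟩
  · rw [← sin_pi_sub]
    exact hsin (π - θ) ⟨by linarith, by linarith⟩

lemma EuclideanGeometry.pi_div_three_le_angle_or_angle_or_angle {V P : Type*} [NormedAddCommGroup V]
    [InnerProductSpace ℝ V] [MetricSpace P] [NormedAddTorsor V P] (A B C : P) :
    π / 3 ≤ ∠ B A C ∨ π / 3 ≤ ∠ A B C ∨ π / 3 ≤ ∠ A C B := by
  by_cases hBA : B = A
  · subst hBA
    left
    rw [angle_self_left]
    linarith [pi_pos]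
  have hsum := angle_add_angle_add_angle_eq_pi C hBA
  rw [angle_comm B C A, angle_comm C A B] at hsum
  by_contra! h
  obtain ⟨hA, hB, hC⟩ := h
  linarith

lemma abs_cross_eq_sin_angle_mul_norm_mul_norm (x y : EuclideanSpace ℝ (Fin 2)) :
    |x 0 * y 1 - x 1 * y 0| = sin (InnerProductGeometry.angle x y) * (‖x‖ * ‖y‖) := by
  have hinner : ∀ u v : EuclideanSpace ℝ (Fin 2), inner ℝ u v = u 0 * v 0 + u 1 * v 1 := by
    intro u v
    simp [PiLp.inner_apply, Fin.sum_univ_two, mul_comm]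
  rw [InnerProductGeometry.sin_angle_mul_norm_mul_norm, hinner, hinner, hinner, ← sqrt_sq_eq_abs]
  congr 1
  ring

lemma two_mul_triArea_eq_sin_angle_mul_dist_mul_dist (A B C : EuclideanSpace ℝ (Fin 2)) :
    2 * triArea A B C = sin (∠ B A C) * (dist A B * dist A C) := by
  rw [dist_comm A B, dist_comm A C, dist_eq_norm_vsub, dist_eq_norm_vsub, angle,
    ← abs_cross_eq_sin_angle_mul_norm_mul_norm]
  simp only [triArea, vsub_eq_sub, PiLp.sub_apply]
  ring

lemma triArea_swap (A B C : EuclideanSpace ℝ (Fin 2)) : triArea B A C = triArea A B C := by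
  rw [triArea, triArea, ← abs_neg]
  ring_nf

lemma triArea_rotate (A B C : EuclideanSpace ℝ (Fin 2)) : triArea C A B = triArea A B C := by
  rw [triArea, triArea]
  ring_nf

lemma sin_angle_le_one_half_of_triArea_le {A B C : EuclideanSpace ℝ (Fin 2)}
    (hAB : 1 ≤ dist A B) (hAC : 1 ≤ dist A C) (harea : triArea A B C ≤ 1 / 4) :
    sin (∠ B A C) ≤ 1 / 2 := by
  have hsin : 0 ≤ sin (∠ B A C) := sin_nonneg_of_nonneg_of_le_pi (angle_nonneg _ _ _)
    (angle_le_pi _ _ _)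
  have hdist : 1 ≤ dist A B * dist A C := one_le_mul_of_one_le_of_one_le hAB hAC
  calc sin (∠ B A C) ≤ sin (∠ B A C) * (dist A B * dist A C) := le_mul_of_one_le_right hsin hdist
    _ = 2 * triArea A B C := (two_mul_triArea_eq_sin_angle_mul_dist_mul_dist A B C).symm
    _ ≤ 1 / 2 := by linarith

theorem stmt_0_general (A B C : EuclideanSpace ℝ (Fin 2))
    (hAB : 1 ≤ dist A B) (hBC : 1 ≤ dist B C) (hCA : 1 ≤ dist C A)
    (harea : triArea A B C ≤ 1 / 4) :
    2 * π / 3 ≤ ∠ B A C ∨ 2 * π / 3 ≤ ∠ A B C ∨ 2 * π / 3 ≤ ∠ A C B := by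
  have hsinA : sin (∠ B A C) ≤ 1 / 2 :=
    sin_angle_le_one_half_of_triArea_le hAB (dist_comm C A ▸ hCA) harea
  have hsinB : sin (∠ A B C) ≤ 1 / 2 :=
    sin_angle_le_one_half_of_triArea_le (dist_comm A B ▸ hAB) hBC (triArea_swap A B C ▸ harea)
  have hsinC : sin (∠ A C B) ≤ 1 / 2 :=
    sin_angle_le_one_half_of_triArea_le hCA (dist_comm B C ▸ hBC) (triArea_rotate A B C ▸ harea)
  by_contra! hlt
  obtain ⟨hA, hB, hC⟩ := hlt
  have hsmall : ∀ θ, π / 3 ≤ θ → θ < 2 * π / 3 → θ ∈ Set.Ioo (π / 6) (5 * π / 6) :=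
    fun θ hlo hhi => ⟨by linarith [pi_pos], by linarith [pi_pos]⟩
  rcases pi_div_three_le_angle_or_angle_or_angle A B C with h | h | h
  · exact hsinA.not_gt (one_half_lt_sin_of_mem_Ioo (hsmall _ h hA))
  · exact hsinB.not_gt (one_half_lt_sin_of_mem_Ioo (hsmall _ h hB))
  · exact hsinC.not_gt (one_half_lt_sin_of_mem_Ioo (hsmall _ h hC))

theorem stmt_0 (A B C : EuclideanSpace ℝ (Fin 2))
    (hncol : ¬ Collinear ℝ ({A, B, C} : Set (EuclideanSpace ℝ (Fin 2))))
    (hAB : 1 ≤ dist A B) (hBC : 1 ≤ dist B C) (hCA : 1 ≤ dist C A)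
    (harea : triArea A B C ≤ 1 / 4) :
    2 * π / 3 ≤ ∠ B A C ∨ 2 * π / 3 ≤ ∠ A B C ∨ 2 * π / 3 ≤ ∠ A C B :=
  stmt_0_general A B C hAB hBC hCA harea
end

section
/- Let A, B, C be non-collinear points with all pairwise distances at least 1 and triangle area at most 1/4, with AB the longest side. If D is a point inside or on the triangle ABC with |CD| ≥ 1, then at least one of the angles ∠ACD or ∠BCD is strictly greater than π/2. -/
/-! With `u = A - C`, `v = B - C` and `w = D - C = a • u + b • v` (`a, b ≥ 0`, `a + b ≤ 1`),
`⟪u, w⟫ ⟪v, w⟫ = ‖w‖² ⟪u, v⟫ + a b (‖u‖² ‖v‖² - ⟪u, v⟫²)`, and the Gram determinant in the bracket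
is `(2 · area)² ≤ 1/4`. Since all sides are at least `1` and `AB` is the longest, that small Gram
determinant forces `⟪u, v⟫ < -1/2`; with `‖w‖ ≥ 1` and `a b ≤ 1/4` the product is then negative,
so one of the two angles at `C` is obtuse. -/

open Real EuclideanGeometry

open RealInnerProductSpace

theorem exists_sub_eq_smul_add_smul_of_mem_convexHull_triple {E : Type*} [AddCommGroup E]
    [Module ℝ E] {A B C D : E} (hD : D ∈ convexHull ℝ {A, B, C}) :
    ∃ a b : ℝ, 0 ≤ a ∧ 0 ≤ b ∧ a + b ≤ 1 ∧ D - C = a • (A - C) + b • (B - C) := by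
  rw [convexHull_insert (by simp), convexHull_pair, mem_convexJoin] at hD
  obtain ⟨_, rfl, _, ⟨s, s', hs, hs', hss, rfl⟩, ⟨t, t', ht, ht', htt, rfl⟩⟩ := hD
  refine ⟨t, t' * s, ht, mul_nonneg ht' hs, by nlinarith, ?_⟩
  obtain rfl : s' = 1 - s := by linarith
  obtain rfl : t' = 1 - t := by linarith
  module

namespace InnerProductGeometry

variable {V : Type*} [NormedAddCommGroup V] [InnerProductSpace ℝ V]

theorem pi_div_two_lt_angle_of_inner_neg {x y : V} (h : ⟪x, y⟫ < 0) : π / 2 < angle x y := by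
  have hx : x ≠ 0 := by rintro rfl; simp at h
  have hy : y ≠ 0 := by rintro rfl; simp at h
  rw [angle, ← not_le, Real.arccos_le_pi_div_two, not_le]
  exact div_neg_of_neg_of_pos h (by positivity)

theorem inner_smul_add_smul_mul_inner_smul_add_smul (u v : V) (a b : ℝ) :
    ⟪u, a • u + b • v⟫ * ⟪v, a • u + b • v⟫ =
      ‖a • u + b • v‖ ^ 2 * ⟪u, v⟫ + a * b * (‖u‖ ^ 2 * ‖v‖ ^ 2 - ⟪u, v⟫ ^ 2) := by
  rw [← real_inner_self_eq_norm_sq (a • u + b • v)]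
  simp only [inner_add_left, inner_add_right, real_inner_smul_left, real_inner_smul_right]
  simp only [real_inner_self_eq_norm_sq, real_inner_comm u v]
  ring

theorem inner_lt_neg_half_of_gram_le {u v : V} (hu : 1 ≤ ‖u‖) (hv : 1 ≤ ‖v‖)
    (hvu : ‖v‖ ≤ ‖u - v‖) (huv : ‖u‖ ≤ ‖u - v‖)
    (hgram : ‖u‖ ^ 2 * ‖v‖ ^ 2 - ⟪u, v⟫ ^ 2 ≤ 1 / 4) : ⟪u, v⟫ < -1 / 2 := by
  have hsub := norm_sub_sq_real u v
  have hU : 1 ≤ ‖u‖ ^ 2 := one_le_pow₀ hu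
  have hV : 1 ≤ ‖v‖ ^ 2 := one_le_pow₀ hv
  have h2v : 2 * ⟪u, v⟫ ≤ ‖v‖ ^ 2 := by nlinarith [pow_le_pow_left₀ (norm_nonneg v) hvu 2]
  have h2u : 2 * ⟪u, v⟫ ≤ ‖u‖ ^ 2 := by nlinarith [pow_le_pow_left₀ (norm_nonneg u) huv 2]
  have hneg : ⟪u, v⟫ < 0 := by
    by_contra! hS
    nlinarith [mul_le_mul h2u h2v (by linarith) (by positivity),
      mul_le_mul hU hV zero_le_one (by positivity)]
  nlinarith [mul_le_mul hU hV zero_le_one (by positivity)]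

theorem inner_neg_or_inner_neg_of_gram_le {u v : V} {a b : ℝ} (hu : 1 ≤ ‖u‖) (hv : 1 ≤ ‖v‖)
    (hvu : ‖v‖ ≤ ‖u - v‖) (huv : ‖u‖ ≤ ‖u - v‖)
    (hgram : ‖u‖ ^ 2 * ‖v‖ ^ 2 - ⟪u, v⟫ ^ 2 ≤ 1 / 4)
    (ha : 0 ≤ a) (hb : 0 ≤ b) (hab : a + b ≤ 1) (hw : 1 ≤ ‖a • u + b • v‖) :
    ⟪u, a • u + b • v⟫ < 0 ∨ ⟪v, a • u + b • v⟫ < 0 := by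
  by_contra! h
  have hS := inner_lt_neg_half_of_gram_le hu hv hvu huv hgram
  have hW : 1 ≤ ‖a • u + b • v‖ ^ 2 := one_le_pow₀ hw
  have hab4 : a * b ≤ 1 / 4 := by nlinarith [sq_nonneg (a - b)]
  have hprod := inner_smul_add_smul_mul_inner_smul_add_smul u v a b
  nlinarith [mul_nonneg h.1 h.2, mul_le_mul_of_nonneg_left hgram (mul_nonneg ha hb)]

end InnerProductGeometry

theorem EuclideanSpace.norm_sq_mul_norm_sq_sub_inner_sq (u v : EuclideanSpace ℝ (Fin 2)) :
    ‖u‖ ^ 2 * ‖v‖ ^ 2 - ⟪u, v⟫ ^ 2 = (u 0 * v 1 - u 1 * v 0) ^ 2 := by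
  simp only [EuclideanSpace.real_norm_sq_eq, PiLp.inner_apply, RCLike.inner_apply, conj_trivial,
    Fin.sum_univ_two]
  ring

theorem gram_eq_sq_two_mul_triArea (A B C : EuclideanSpace ℝ (Fin 2)) :
    ‖A - C‖ ^ 2 * ‖B - C‖ ^ 2 - ⟪A - C, B - C⟫ ^ 2 = (2 * triArea A B C) ^ 2 := by
  rw [EuclideanSpace.norm_sq_mul_norm_sq_sub_inner_sq, triArea, mul_div_cancel₀ _ two_ne_zero,
    sq_abs]
  simp only [PiLp.sub_apply]
  ring

theorem stmt_2_general (A B C D : EuclideanSpace ℝ (Fin 2))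
    (hBC : 1 ≤ dist B C) (hCA : 1 ≤ dist C A)
    (harea : triArea A B C ≤ 1 / 4)
    (hlong1 : dist B C ≤ dist A B) (hlong2 : dist A C ≤ dist A B)
    (hD : D ∈ convexHull ℝ ({A, B, C} : Set (EuclideanSpace ℝ (Fin 2))))
    (hCD : 1 ≤ dist C D) :
    π / 2 < ∠ A C D ∨ π / 2 < ∠ B C D := by
  obtain ⟨a, b, ha, hb, hab, hDC⟩ := exists_sub_eq_smul_add_smul_of_mem_convexHull_triple hD
  have hgram : ‖A - C‖ ^ 2 * ‖B - C‖ ^ 2 - ⟪A - C, B - C⟫ ^ 2 ≤ 1 / 4 := by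
    have harea_nonneg : 0 ≤ triArea A B C := by unfold triArea; positivity
    rw [gram_eq_sq_two_mul_triArea]; nlinarith
  rw [dist_comm] at hCA hCD
  simp only [dist_eq_norm] at hBC hCA hlong1 hlong2 hCD
  rw [← sub_sub_sub_cancel_right A B C] at hlong1 hlong2
  rw [hDC] at hCD
  simp only [EuclideanGeometry.angle, vsub_eq_sub, hDC]
  exact (InnerProductGeometry.inner_neg_or_inner_neg_of_gram_le hCA hBC hlong1 hlong2 hgram
    ha hb hab hCD).imp InnerProductGeometry.pi_div_two_lt_angle_of_inner_neg
    InnerProductGeometry.pi_div_two_lt_angle_of_inner_neg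

theorem stmt_2 (A B C D : EuclideanSpace ℝ (Fin 2))
    (hncol : ¬ Collinear ℝ ({A, B, C} : Set (EuclideanSpace ℝ (Fin 2))))
    (hAB : 1 ≤ dist A B) (hBC : 1 ≤ dist B C) (hCA : 1 ≤ dist C A)
    (harea : triArea A B C ≤ 1 / 4)
    (hlong1 : dist B C ≤ dist A B) (hlong2 : dist A C ≤ dist A B)
    (hD : D ∈ convexHull ℝ ({A, B, C} : Set (EuclideanSpace ℝ (Fin 2))))
    (hCD : 1 ≤ dist C D) :
    π / 2 < ∠ A C D ∨ π / 2 < ∠ B C D :=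
  stmt_2_general A B C D hBC hCA harea hlong1 hlong2 hD hCD
end

section
/- A triangle with all side lengths at least 1 and at most r, and with area at most 1/4, has perimeter at most 2r + 1/4. -/
theorem dist_sq_eq_fin_two (X Y : EuclideanSpace ℝ (Fin 2)) :
    dist X Y ^ 2 = (X 0 - Y 0) ^ 2 + (X 1 - Y 1) ^ 2 := by
  simp [EuclideanSpace.dist_sq_eq, Fin.sum_univ_two, Real.dist_eq, sq_abs]

theorem heron_triArea (A B C : EuclideanSpace ℝ (Fin 2)) :
    16 * triArea A B C ^ 2 =
      (dist A B + dist B C + dist C A) * (-dist A B + dist B C + dist C A) *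
        (dist A B - dist B C + dist C A) * (dist A B + dist B C - dist C A) := by
  have hprod : ∀ a b c : ℝ, (a + b + c) * (-a + b + c) * (a - b + c) * (a + b - c) =
      2 * a ^ 2 * b ^ 2 + 2 * b ^ 2 * c ^ 2 + 2 * c ^ 2 * a ^ 2 - a ^ 4 - b ^ 4 - c ^ 4 := by
    intros; ring
  have h4 : ∀ a : ℝ, a ^ 4 = (a ^ 2) ^ 2 := fun a => by ring
  rw [hprod, h4, h4, h4, dist_sq_eq_fin_two, dist_sq_eq_fin_two, dist_sq_eq_fin_two, triArea,
    div_pow, sq_abs]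
  ring

theorem one_lt_quartic (u : ℝ) (h1 : 1 / 4 < u) (h2 : u ≤ 1) :
    1 < u * (2 - u) * (2 - u) * (4 - u) := by
  nlinarith [sq_nonneg (u - 1 / 4), sq_nonneg (u - 1),
    mul_pos (show (0 : ℝ) < u by linarith) (show (0 : ℝ) < 2 - u by linarith)]

theorem one_lt_mul_mul_mul_add (u v w : ℝ) (hu : 1 / 4 < u) (hvu : u ≤ v) (hwu : u ≤ w)
    (hv : 2 - u ≤ v) (hw : 2 - u ≤ w) : 1 < u * v * w * (u + v + w) := by
  have hv0 : 0 < v := by linarith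
  have hw0 : 0 < w := by linarith
  rcases le_or_gt u 1 with hle | hgt
  · calc 1 < u * (2 - u) * (2 - u) * (4 - u) := one_lt_quartic u hu hle
      _ ≤ u * v * w * (u + v + w) := by gcongr <;> linarith
  · calc 1 < u * u * u * (u + u + u) := by nlinarith [one_lt_pow₀ hgt (n := 4) (by norm_num)]
      _ ≤ u * v * w * (u + v + w) := by gcongr

theorem add_sub_le_of_heron_le_one {a b c : ℝ} (ha : 1 ≤ a) (hb : 1 ≤ b) (hac : a ≤ c)
    (hbc : b ≤ c) (h : (a + b + c) * (-a + b + c) * (a - b + c) * (a + b - c) ≤ 1) :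
    a + b - c ≤ 1 / 4 := by
  by_contra! hu
  have := one_lt_mul_mul_mul_add (a + b - c) (-a + b + c) (a - b + c) hu
    (by linarith) (by linarith) (by linarith) (by linarith)
  nlinarith

theorem add_add_le_of_heron_le_one {a b c r : ℝ} (ha : 1 ≤ a) (hb : 1 ≤ b) (hc : 1 ≤ c)
    (har : a ≤ r) (hbr : b ≤ r) (hcr : c ≤ r)
    (h : (a + b + c) * (-a + b + c) * (a - b + c) * (a + b - c) ≤ 1) :
    a + b + c ≤ 2 * r + 1 / 4 := by
  have hsymm : (b + c + a) * (-b + c + a) * (b - c + a) * (b + c - a) ≤ 1 ∧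
      (c + a + b) * (-c + a + b) * (c - a + b) * (c + a - b) ≤ 1 :=
    ⟨by linarith, by linarith⟩
  obtain ⟨hac, hbc⟩ | ⟨hba, hca⟩ | ⟨hcb, hab⟩ :
      (a ≤ c ∧ b ≤ c) ∨ (b ≤ a ∧ c ≤ a) ∨ (c ≤ b ∧ a ≤ b) := by grind
  · linarith [add_sub_le_of_heron_le_one ha hb hac hbc h]
  · linarith [add_sub_le_of_heron_le_one hb hc hba hca hsymm.1]
  · linarith [add_sub_le_of_heron_le_one hc ha hcb hab hsymm.2]

theorem stmt_9 (r : ℝ) (A B C : EuclideanSpace ℝ (Fin 2))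
    (hAB : 1 ≤ dist A B) (hBC : 1 ≤ dist B C) (hCA : 1 ≤ dist C A)
    (hAB' : dist A B ≤ r) (hBC' : dist B C ≤ r) (hCA' : dist C A ≤ r)
    (harea : triArea A B C ≤ 1 / 4) :
    dist A B + dist B C + dist C A ≤ 2 * r + 1 / 4 := by
  refine add_add_le_of_heron_le_one hAB hBC hCA hAB' hBC' hCA' ?_
  have harea_nonneg : 0 ≤ triArea A B C := by unfold triArea; positivity
  rw [← heron_triArea]
  nlinarith
end

section
/- Let ABC be a triangle with all sides of length at least 1, area at most 1/4, and longest side AB. Then the angle at C is at least 2π/3 and the foot of the altitude from C lies strictly inside segment AB. -/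
open Real EuclideanGeometry RealInnerProductSpace

/-!
The law of cosines and `c ≥ a, b` give `cos C ≤ 1/2`, while `ab sin C = 2 · area ≤ 1/2` and
`ab ≥ 1` give `sin C ≤ 1/2`. Then `cos² C ≥ 3/4`, so `cos C < -1/2` and `C > 2π/3`.
Since `AB` is the longest side, the angles at `A` and `B` are acute, so the foot of the
altitude from `C` lies strictly between `A` and `B`.
-/

lemma two_mul_pi_div_three_le_of_sin_le_of_cos_le {θ : ℝ} (h₀ : 0 ≤ θ) (hπ : θ ≤ π)
    (hsin : sin θ ≤ 1 / 2) (hcos : cos θ ≤ 1 / 2) : 2 * π / 3 ≤ θ := by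
  have hsin₀ : 0 ≤ sin θ := sin_nonneg_of_nonneg_of_le_pi h₀ hπ
  have hcos_lt : cos θ < -(1 / 2) := by
    nlinarith [sin_sq_add_cos_sq θ]
  have hcos_two_pi_div_three : cos (2 * π / 3) = -(1 / 2) := by
    rw [show 2 * π / 3 = π - π / 3 by ring, cos_pi_sub, cos_pi_div_three]
  by_contra! hlt
  have := cos_lt_cos_of_nonneg_of_le_pi h₀ (by linarith [pi_pos]) hlt
  linarith

section InnerProductSpace

variable {V : Type*} [NormedAddCommGroup V] [InnerProductSpace ℝ V]

lemma cos_angle_le_half_of_dist_le {A B C : V} (hBC : dist B C ≤ dist A B)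
    (hAC : dist A C ≤ dist A B) : cos (∠ A C B) ≤ 1 / 2 := by
  rcases eq_or_ne A C with rfl | hA
  · simp
  rcases eq_or_ne B C with rfl | hB
  · simp
  have hpos : 0 < dist A C * dist B C := mul_pos (dist_pos.2 hA) (dist_pos.2 hB)
  have hcos := law_cos A C B
  -- `a² + b² - c² ≤ min a² b² ≤ ab`
  have hmin : dist A C * dist A C + dist B C * dist B C - dist A B * dist A B ≤
      dist A C * dist B C := by
    nlinarith [dist_nonneg (x := A) (y := C), dist_nonneg (x := B) (y := C)]
  nlinarith

lemma inner_sub_pos_of_dist_le {A B C : V} (hCA : C ≠ A) (hBC : dist B C ≤ dist A B) :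
    0 < ⟪C - A, B - A⟫ := by
  have hlaw := norm_sub_sq_real (C - A) (B - A)
  rw [sub_sub_sub_cancel_right, ← dist_eq_norm, ← dist_eq_norm, ← dist_eq_norm] at hlaw
  have : 0 < dist C A := dist_pos.2 hCA
  rw [dist_comm C B, dist_comm B A] at hlaw
  nlinarith [dist_nonneg (x := B) (y := C)]

lemma exists_mem_openSegment_inner_eq_zero {A B C : V} (hA : 0 < ⟪C - A, B - A⟫)
    (hB : 0 < ⟪C - B, A - B⟫) : ∃ F ∈ openSegment ℝ A B, ⟪C - F, B - A⟫ = 0 := by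
  have hsum : ⟪C - A, B - A⟫ + ⟪C - B, A - B⟫ = ‖B - A‖ ^ 2 := by
    rw [← neg_sub B A, inner_neg_right, ← sub_eq_add_neg, ← inner_sub_left,
      sub_sub_sub_cancel_left, real_inner_self_eq_norm_sq]
  have hnorm : 0 < ‖B - A‖ ^ 2 := by linarith
  set t := ⟪C - A, B - A⟫ / ‖B - A‖ ^ 2
  have ht₀ : 0 < t := div_pos hA hnorm
  have ht₁ : t < 1 := (div_lt_one hnorm).2 (by linarith)
  refine ⟨A + t • (B - A), ⟨1 - t, t, by linarith, ht₀, by ring, by module⟩, ?_⟩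
  rw [show C - (A + t • (B - A)) = (C - A) - t • (B - A) by abel, inner_sub_left,
    real_inner_smul_left, real_inner_self_eq_norm_sq, div_mul_cancel₀ _ hnorm.ne', sub_self]

end InnerProductSpace

lemma sin_angle_mul_dist_mul_dist_eq_two_mul_triArea (A B C : EuclideanSpace ℝ (Fin 2)) :
    sin (∠ A C B) * (dist A C * dist B C) = 2 * triArea A B C := by
  have hgram : ⟪A - C, A - C⟫ * ⟪B - C, B - C⟫ - ⟪A - C, B - C⟫ * ⟪A - C, B - C⟫ =
      ((B 0 - A 0) * (C 1 - A 1) - (B 1 - A 1) * (C 0 - A 0)) ^ 2 := by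
    simp only [PiLp.inner_apply, RCLike.inner_apply, starRingEnd_apply, star_trivial,
      Fin.sum_univ_two, PiLp.sub_apply]
    ring
  rw [dist_eq_norm, dist_eq_norm, angle, vsub_eq_sub, vsub_eq_sub,
    InnerProductGeometry.sin_angle_mul_norm_mul_norm, hgram, sqrt_sq_eq_abs, triArea]
  ring

theorem stmt_17_general (A B C : EuclideanSpace ℝ (Fin 2))
    (hBC : 1 ≤ dist B C) (hCA : 1 ≤ dist C A)
    (harea : triArea A B C ≤ 1 / 4)
    (hlong1 : dist B C ≤ dist A B) (hlong2 : dist A C ≤ dist A B) :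
    2 * π / 3 ≤ ∠ A C B ∧
    ∃ F ∈ openSegment ℝ A B, (inner ℝ (C - F) (B - A) : ℝ) = 0 := by
  rw [dist_comm C A] at hCA
  have hsin : sin (∠ A C B) ≤ 1 / 2 := by
    have hmul := sin_angle_mul_dist_mul_dist_eq_two_mul_triArea A B C
    have hsin₀ := sin_nonneg_of_nonneg_of_le_pi (angle_nonneg A C B) (angle_le_pi A C B)
    have hdist : 1 ≤ dist A C * dist B C := one_le_mul_of_one_le_of_one_le hCA hBC
    nlinarith [mul_le_mul_of_nonneg_left hdist hsin₀]
  have hCA' : C ≠ A := (dist_pos.1 (by linarith : 0 < dist A C)).symm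
  have hCB' : C ≠ B := (dist_pos.1 (by linarith : 0 < dist B C)).symm
  refine ⟨two_mul_pi_div_three_le_of_sin_le_of_cos_le (angle_nonneg A C B)
    (angle_le_pi A C B) hsin (cos_angle_le_half_of_dist_le hlong1 hlong2), ?_⟩
  exact exists_mem_openSegment_inner_eq_zero (inner_sub_pos_of_dist_le hCA' hlong1)
    (inner_sub_pos_of_dist_le hCB' (by rwa [dist_comm B A]))

theorem stmt_17 (A B C : EuclideanSpace ℝ (Fin 2))
    (hncol : ¬ Collinear ℝ ({A, B, C} : Set (EuclideanSpace ℝ (Fin 2))))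
    (hAB : 1 ≤ dist A B) (hBC : 1 ≤ dist B C) (hCA : 1 ≤ dist C A)
    (harea : triArea A B C ≤ 1 / 4)
    (hlong1 : dist B C ≤ dist A B) (hlong2 : dist A C ≤ dist A B) :
    2 * π / 3 ≤ ∠ A C B ∧
    ∃ F ∈ openSegment ℝ A B, (inner ℝ (C - F) (B - A) : ℝ) = 0 :=
  stmt_17_general A B C hBC hCA harea hlong1 hlong2
end
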